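/- Suppose (Z, 0) is the unique minimizer of ‖Z'‖_* + λ‖C'‖_{1,2} subject to Z' + C'·H̄ᵀ = Z (i.e., the attack-free matrix Z bypasses the LD detector), and let C* minimize ‖Z + C·H̄ᵀ‖_* over matrices C with supp(C) ⊆ I. Let Z̄* = Z + C*·H̄ᵀ. Then any optimal solution C^{LD} of the LD detector applied to Z̄* satisfies: either C^{LD} = 0, or supp(C^{LD}) ⊄ I. -/

import Mathlib

open Matrix Finset

/-- Nuclear norm: sum of singular values, i.e. sum of square roots of
eigenvalues of `Aᴴ * A`. -/
noncomputable def nuclearNorm {m n : ℕ} (A : Matrix (Fin m) (Fin n) ℂ) : ℝ :=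
  ∑ i, Real.sqrt ((Matrix.isHermitian_conjTranspose_mul_self A).eigenvalues i)

/-- Column support: set of indices of nonzero columns. -/
def colSupport {N n : ℕ} (C : Matrix (Fin N) (Fin n) ℂ) : Set (Fin n) :=
  {j | ∃ i, C i j ≠ 0}

/-- The `l_{1,2}` norm: sum over columns of the Euclidean norm of the column. -/
noncomputable def l12Norm {N n : ℕ} (C : Matrix (Fin N) (Fin n) ℂ) : ℝ :=
  ∑ j, Real.sqrt (∑ i, ‖C i j‖ ^ 2)

/-- Frobenius norm. -/
noncomputable def frobNorm {N n : ℕ} (A : Matrix (Fin N) (Fin n) ℂ) : ℝ :=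
  Real.sqrt (∑ i, ∑ j, ‖A i j‖ ^ 2)

/-!
If `C^{LD}` were nonzero with support in `I`, then `C* - C^{LD}` would be an admissible attack
with `Z + (C* - C^{LD}) H̄ᵀ = Z^{LD}`, so minimality of `C*` gives `‖Z̄*‖_* ≤ ‖Z^{LD}‖_*`.
Comparing the LD optimum with the feasible pair `(Z̄*, 0)` gives
`‖Z^{LD}‖_* + λ ‖C^{LD}‖_{1,2} ≤ ‖Z̄*‖_*`, hence `λ ‖C^{LD}‖_{1,2} ≤ 0`, contradicting `C^{LD} ≠ 0`.
-/

theorem colSupport_sub_subset {N n : ℕ} (A B : Matrix (Fin N) (Fin n) ℂ) :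
    colSupport (A - B) ⊆ colSupport A ∪ colSupport B := by
  rintro j ⟨i, hij⟩
  by_contra hj
  simp only [Set.mem_union, colSupport, Set.mem_ofPred_eq, not_or, not_exists, not_not] at hj
  exact hij (by rw [Matrix.sub_apply, hj.1 i, hj.2 i, sub_zero])

@[simp]
theorem l12Norm_zero {N n : ℕ} : l12Norm (0 : Matrix (Fin N) (Fin n) ℂ) = 0 := by
  simp [l12Norm]

theorem l12Norm_pos {N n : ℕ} {C : Matrix (Fin N) (Fin n) ℂ} (hC : C ≠ 0) : 0 < l12Norm C := by
  obtain ⟨i, j, hij⟩ : ∃ i j, C i j ≠ 0 := by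
    by_contra! h
    exact hC (ext h)
  have hcol : 0 < ∑ i', ‖C i' j‖ ^ 2 :=
    sum_pos' (fun _ _ => by positivity) ⟨i, mem_univ _, by positivity⟩
  exact sum_pos' (fun _ _ => Real.sqrt_nonneg _) ⟨j, mem_univ _, Real.sqrt_pos.2 hcol⟩

theorem stmt2_general {N nz nb : ℕ} (Z : Matrix (Fin N) (Fin nz) ℂ)
    (Hbar : Matrix (Fin nz) (Fin nb) ℂ) (lam : ℝ) (hlam : 0 < lam)
    (I : Set (Fin nb))
    (Cstar : Matrix (Fin N) (Fin nb) ℂ)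
    (hCfeas : colSupport Cstar ⊆ I)
    (hCmin : ∀ C : Matrix (Fin N) (Fin nb) ℂ, colSupport C ⊆ I →
      nuclearNorm (Z + Cstar * Hbarᵀ) ≤ nuclearNorm (Z + C * Hbarᵀ))
    (ZLD : Matrix (Fin N) (Fin nz) ℂ) (CLD : Matrix (Fin N) (Fin nb) ℂ)
    -- (ZLD, CLD) is an optimal solution of the LD detector with input Z̄* = Z + C*·H̄ᵀ
    (hfeas : Z + Cstar * Hbarᵀ = ZLD + CLD * Hbarᵀ)
    (hopt : ∀ (Z' : Matrix (Fin N) (Fin nz) ℂ) (C' : Matrix (Fin N) (Fin nb) ℂ),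
      Z + Cstar * Hbarᵀ = Z' + C' * Hbarᵀ →
      nuclearNorm ZLD + lam * l12Norm CLD ≤ nuclearNorm Z' + lam * l12Norm C') :
    CLD = 0 ∨ ¬ colSupport CLD ⊆ I := by
  refine or_iff_not_imp_left.2 fun hC hsub => ?_
  have hsupp : colSupport (Cstar - CLD) ⊆ I :=
    (colSupport_sub_subset _ _).trans (Set.union_subset hCfeas hsub)
  have hZLD : Z + (Cstar - CLD) * Hbarᵀ = ZLD := by
    rw [Matrix.sub_mul, ← add_sub_assoc, hfeas, add_sub_cancel_right]
  have hmin : nuclearNorm (Z + Cstar * Hbarᵀ) ≤ nuclearNorm ZLD := hZLD ▸ hCmin _ hsupp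
  have hopt0 := hopt (Z + Cstar * Hbarᵀ) 0 (by rw [Matrix.zero_mul, add_zero])
  rw [l12Norm_zero, mul_zero, add_zero] at hopt0
  linarith [mul_pos hlam (l12Norm_pos hC)]

theorem stmt2 {N nz nb : ℕ} (Z : Matrix (Fin N) (Fin nz) ℂ)
    (Hbar : Matrix (Fin nz) (Fin nb) ℂ) (lam : ℝ) (hlam : 0 < lam)
    (I : Set (Fin nb))
    -- (Z, 0) is the unique minimizer of the LD problem with input Z
    (hBypass : ∀ (Z' : Matrix (Fin N) (Fin nz) ℂ) (C' : Matrix (Fin N) (Fin nb) ℂ),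
      Z = Z' + C' * Hbarᵀ → ¬(Z' = Z ∧ C' = 0) →
      nuclearNorm Z < nuclearNorm Z' + lam * l12Norm C')
    (Cstar : Matrix (Fin N) (Fin nb) ℂ)
    (hCfeas : colSupport Cstar ⊆ I)
    (hCmin : ∀ C : Matrix (Fin N) (Fin nb) ℂ, colSupport C ⊆ I →
      nuclearNorm (Z + Cstar * Hbarᵀ) ≤ nuclearNorm (Z + C * Hbarᵀ))
    (ZLD : Matrix (Fin N) (Fin nz) ℂ) (CLD : Matrix (Fin N) (Fin nb) ℂ)
    -- (ZLD, CLD) is an optimal solution of the LD detector with input Z̄* = Z + C*·H̄ᵀ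
    (hfeas : Z + Cstar * Hbarᵀ = ZLD + CLD * Hbarᵀ)
    (hopt : ∀ (Z' : Matrix (Fin N) (Fin nz) ℂ) (C' : Matrix (Fin N) (Fin nb) ℂ),
      Z + Cstar * Hbarᵀ = Z' + C' * Hbarᵀ →
      nuclearNorm ZLD + lam * l12Norm CLD ≤ nuclearNorm Z' + lam * l12Norm C') :
    CLD = 0 ∨ ¬ colSupport CLD ⊆ I :=
  stmt2_general Z Hbar lam hlam I Cstar hCfeas hCmin ZLD CLD hfeas hopt
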